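/- arXiv:0901.1339 — 2 statements merged into one kernel-verified Lean document; each statement's English description precedes it below -/
import Mathlib

section
/- For any α, α†, β, β†, γ, γ† in F, the linear map D : L → L ⊗ L defined on basis elements by D(L_n) = (nα+γ) M_0 ⊗ M_n + (nα†+γ†) M_n ⊗ M_0, D(Y_{n−1/2}) = β M_0 ⊗ Y_{n−1/2} + β† Y_{n−1/2} ⊗ M_0, D(M_n) = 2(β M_0 ⊗ M_n + β† M_n ⊗ M_0), is a derivation from L to the L-module L ⊗ L under the adjoint diagonal action; that is, D([x,y]) = x·D(y) − y·D(x) for all x, y ∈ L. -/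
open TensorProduct

/-- Index set for the basis of the Schrödinger–Virasoro algebra:
`Sum.inl n ↔ L_n`, `Sum.inr (Sum.inl n) ↔ Y_{n+1/2}`, `Sum.inr (Sum.inr n) ↔ M_n`. -/
abbrev SVIx : Type := ℤ ⊕ ℤ ⊕ ℤ

variable (F : Type) [Field F] [CharZero F]

/-- Underlying space of the Schrödinger–Virasoro algebra: the free `F`-module on `SVIx`. -/
abbrev SVL := SVIx →₀ F

noncomputable def Lb (n : ℤ) : SVL F := Finsupp.single (Sum.inl n) 1
noncomputable def Yb (n : ℤ) : SVL F := Finsupp.single (Sum.inr (Sum.inl n)) 1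
noncomputable def Mb (n : ℤ) : SVL F := Finsupp.single (Sum.inr (Sum.inr n)) 1

/-- The bracket of basis vectors.  Here `Yb n` stands for `Y_{n+1/2}`, so
`[L_m, Y_{n+1/2}] = ((n+1/2) - m/2) Y_{m+n+1/2}` and
`[Y_{a+1/2}, Y_{b+1/2}] = (b-a) M_{a+b+1}`; all other brackets vanish. -/
noncomputable def brIx : SVIx → SVIx → SVL F
  | Sum.inl m, Sum.inl n => ((n - m : ℤ) : F) • Lb F (m + n)
  | Sum.inl m, Sum.inr (Sum.inl n) => (((2*n + 1 - m : ℤ) : F) / 2) • Yb F (m + n)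
  | Sum.inl m, Sum.inr (Sum.inr n) => ((n : ℤ) : F) • Mb F (m + n)
  | Sum.inr (Sum.inl n), Sum.inl m => -((((2*n + 1 - m : ℤ) : F) / 2) • Yb F (m + n))
  | Sum.inr (Sum.inl a), Sum.inr (Sum.inl b) => ((b - a : ℤ) : F) • Mb F (a + b + 1)
  | Sum.inr (Sum.inr n), Sum.inl m => -(((n : ℤ) : F) • Mb F (m + n))
  | _, _ => 0

/-- The bracket of the Schrödinger–Virasoro algebra: the bilinear extension of `brIx`. -/
noncomputable def bk : SVL F →ₗ[F] SVL F →ₗ[F] SVL F :=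
  Finsupp.lsum F fun i => LinearMap.toSpanSingleton F (SVL F →ₗ[F] SVL F)
    (Finsupp.lsum F fun j => LinearMap.toSpanSingleton F (SVL F) (brIx F i j))

abbrev VV := SVL F ⊗[F] SVL F

noncomputable instance : AddCommGroup (VV F) := inferInstance

noncomputable instance : Zero (VV F) :=
  (inferInstanceAs (AddCommMonoid (VV F)) : AddCommMonoid (VV F)).toAddMonoid.toZero

/-- The adjoint diagonal action of `L` on `L ⊗ L`, as a bilinear map:
`x · (a ⊗ b) = [x,a] ⊗ b + a ⊗ [x,b]`. -/
noncomputable def adVb : SVL F →ₗ[F] VV F →ₗ[F] VV F :=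
  ((LinearMap.rTensorHom (SVL F) : (SVL F →ₗ[F] SVL F) →ₗ[F] (VV F →ₗ[F] VV F)) ∘ₗ bk F)
    + ((LinearMap.lTensorHom (SVL F) : (SVL F →ₗ[F] SVL F) →ₗ[F] (VV F →ₗ[F] VV F)) ∘ₗ bk F)

/-- The twist map `τ(x ⊗ y) = y ⊗ x`. -/
noncomputable def tau : VV F →ₗ[F] VV F := (TensorProduct.comm F (SVL F) (SVL F)).toLinearMap

/-- The map `1 - τ`. -/
noncomputable def oneMinusTau : VV F →ₗ[F] VV F where
  toFun v := v - tau F v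
  map_add' x y := by
    simp only [map_add]; exact sub_add_sub_comm x (tau F x) y (tau F y) ▸ rfl
  map_smul' c x := by simp only [map_smul, RingHom.id_apply, smul_sub]

/-- `Im (1 - τ) ⊂ L ⊗ L`. -/
noncomputable def skewIm : Submodule F (VV F) := LinearMap.range (oneMinusTau F)
/-- Values on basis elements of the special derivations `D` with parameters
`(α, α†, β, β†, γ, γ†)`:  `D(L_n) = (nα+γ) M₀⊗M_n + (nα†+γ†) M_n⊗M₀`,
`D(Y_{n+1/2}) = β M₀⊗Y_{n+1/2} + β† Y_{n+1/2}⊗M₀`, `D(M_n) = 2(β M₀⊗M_n + β† M_n⊗M₀)`. -/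
noncomputable def dval (a a' b b' c c' : F) : SVIx → VV F
  | Sum.inl n => (((n : ℤ) : F) * a + c) • (Mb F 0 ⊗ₜ[F] Mb F n)
      + (((n : ℤ) : F) * a' + c') • (Mb F n ⊗ₜ[F] Mb F 0)
  | Sum.inr (Sum.inl n) => b • (Mb F 0 ⊗ₜ[F] Yb F n) + b' • (Yb F n ⊗ₜ[F] Mb F 0)
  | Sum.inr (Sum.inr n) => (2 * b) • (Mb F 0 ⊗ₜ[F] Mb F n) + (2 * b') • (Mb F n ⊗ₜ[F] Mb F 0)

/-- The special derivation with parameters `(α, α†, β, β†, γ, γ†)`. -/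
noncomputable def Dmap (a a' b b' c c' : F) : SVL F →ₗ[F] VV F :=
  Finsupp.lsum F fun i => LinearMap.toSpanSingleton F (VV F) (dval F a a' b b' c c' i)

/-- `D` is a derivation from `L` to the `L`-module `L ⊗ L`. -/
def IsDer (D : SVL F →ₗ[F] VV F) : Prop :=
  ∀ x y : SVL F, D (bk F x y) = adVb F x (D y) - adVb F y (D x)

/-! `M₀` is central, so `D x = M₀ ⊗ φ x + ψ x ⊗ M₀` with `φ, ψ : L → L`, and `L` acts on `M₀ ⊗ v`
and on `v ⊗ M₀` only through the second, resp. first, factor. Hence `D` is a derivation into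
`L ⊗ L` as soon as `φ` and `ψ` are derivations of `L`. Each of them is `β` times the derivation
grading `L, Y, M` in degrees `0, 1, 2`, plus `L_n ↦ (nα + γ) M_n`, which is a derivation because
`(n - m)((m + n)α + γ) = n(nα + γ) - m(mα + γ)`. -/

section

variable {F : Type} [Field F]

variable (F) in
def IsLDer (φ : SVL F →ₗ[F] SVL F) : Prop :=
  ∀ x y : SVL F, φ (bk F x y) = bk F x (φ y) - bk F y (φ x)

lemma bk_single_single (i j : SVIx) :
    bk F (Finsupp.single i 1) (Finsupp.single j 1) = brIx F i j := by
  simp [bk]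

lemma isLDer_of_brIx (φ : SVL F →ₗ[F] SVL F)
    (h : ∀ i j, φ (brIx F i j) = bk F (Finsupp.single i 1) (φ (Finsupp.single j 1))
      - bk F (Finsupp.single j 1) (φ (Finsupp.single i 1))) :
    IsLDer F φ := by
  have key : (bk F).compr₂ φ + ((bk F).compl₂ φ).flip = (bk F).compl₂ φ :=
    LinearMap.ext_basis Finsupp.basisSingleOne Finsupp.basisSingleOne fun i j => by
      simpa [bk_single_single, eq_sub_iff_add_eq] using h i j
  intro x y
  exact eq_sub_of_add_eq (LinearMap.congr_fun₂ key x y)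

lemma bk_Mb_zero (x : SVL F) : bk F x (Mb F 0) = 0 := by
  suffices (bk F).flip (Mb F 0) = 0 from LinearMap.congr_fun this x
  refine Finsupp.lhom_ext fun i r => ?_
  rcases i with m | m | m <;> simp [bk, Mb, brIx]

lemma isDer_tmul_add_tmul {z : SVL F} (hz : ∀ x, bk F x z = 0) {φ ψ : SVL F →ₗ[F] SVL F}
    (hφ : IsLDer F φ) (hψ : IsLDer F ψ) :
    IsDer F (TensorProduct.mk F _ _ z ∘ₗ φ + (TensorProduct.mk F _ _).flip z ∘ₗ ψ) := by
  have adVb_tmul_left : ∀ x v, adVb F x (z ⊗ₜ v) = z ⊗ₜ bk F x v := fun x v => by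
    simp [adVb, LinearMap.rTensorHom, LinearMap.lTensorHom, hz]
  have adVb_tmul_right : ∀ x v, adVb F x (v ⊗ₜ z) = bk F x v ⊗ₜ z := fun x v => by
    simp [adVb, LinearMap.rTensorHom, LinearMap.lTensorHom, hz]
  intro x y
  simp only [LinearMap.add_apply, LinearMap.comp_apply, TensorProduct.mk_apply,
    LinearMap.flip_apply, map_add, adVb_tmul_left, adVb_tmul_right, hφ x y, hψ x y,
    tmul_sub, sub_tmul]
  abel

noncomputable def svDerVal (a b c : F) : SVIx → SVL F
  | Sum.inl n => ((n : F) * a + c) • Mb F n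
  | Sum.inr (Sum.inl n) => b • Yb F n
  | Sum.inr (Sum.inr n) => (2 * b) • Mb F n

noncomputable def svDer (a b c : F) : SVL F →ₗ[F] SVL F :=
  Finsupp.lsum F fun i => LinearMap.toSpanSingleton F (SVL F) (svDerVal a b c i)

lemma svDer_single (a b c : F) (i : SVIx) :
    svDer a b c (Finsupp.single i 1) = svDerVal a b c i := by
  simp [svDer]

lemma isLDer_svDer (a b c : F) : IsLDer F (svDer a b c) := by
  refine isLDer_of_brIx _ fun i j => ?_
  rcases i with m | m | m <;> rcases j with n | n | n <;>
    simp only [brIx, svDerVal, Lb, Yb, Mb, map_smul, map_neg, map_zero, svDer_single,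
      bk_single_single, smul_zero, add_comm n m] <;>
    push_cast <;> module

lemma Dmap_eq (a a' b b' c c' : F) :
    Dmap F a a' b b' c c' = TensorProduct.mk F _ _ (Mb F 0) ∘ₗ svDer a b c
      + (TensorProduct.mk F _ _).flip (Mb F 0) ∘ₗ svDer a' b' c' := by
  refine Finsupp.lhom_ext' fun i => LinearMap.ext_ring ?_
  rcases i with n | n | n <;>
    simp [Dmap, dval, svDer_single, svDerVal, TensorProduct.smul_tmul']

end

/-- Each member of the six-parameter family `Dmap` is a derivation from `L` to `L ⊗ L`. -/
theorem sv_Dmap_isDer :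
    ∀ a a' b b' c c' : F, IsDer F (Dmap F a a' b b' c c') := by
  intro a a' b b' c c'
  rw [Dmap_eq]
  exact isDer_tmul_add_tmul bk_Mb_zero (isLDer_svDer a b c) (isLDer_svDer a' b' c')
end

section
/- Let L be the Schrödinger-Virasoro algebra and suppose v ∈ L⊗L satisfies x·v ∈ Im(1−τ) for all x ∈ L, where τ is the twist map and the dot is the adjoint diagonal action. Then there exists d₀ ∈ F such that v − d₀ M_0 ⊗ M_0 ∈ Im(1−τ). -/
open TensorProduct

variable (F : Type) [Field F] [CharZero F]

/-! The symmetric part `w = v + τ v` is ad-invariant, because `x · v` is antisymmetric and the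
action commutes with `τ`. Each basis element `L_m`, `Y_{m+1/2}`, `M_k` acts on the coordinates
of an element of `L ⊗ L` as a weighted shift, so `x · w = 0` becomes a family of linear
relations between the coordinates of `w`. The `L₀`-weight kills every coordinate whose weights
do not add up to zero, and `M_1`, `M_{-2p}`, `Y_m`, `L_q` kill the remaining ones except the
coefficient of `M₀ ⊗ M₀` (`M₀` is central). Hence `w = c M₀ ⊗ M₀`, and then
`v - (c/2) M₀ ⊗ M₀ = (1 - τ)(v/2)`. -/

variable {K : Type} [Field K]

lemma tau_tmul (a b : SVL K) : tau K (a ⊗ₜ b) = b ⊗ₜ a := rfl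

lemma tau_tau (v : VV K) : tau K (tau K v) = v := TensorProduct.comm_comm K _ _ v

lemma oneMinusTau_apply (v : VV K) : oneMinusTau K v = v - tau K v := rfl

lemma tau_eq_neg_of_mem_skewIm {u : VV K} (hu : u ∈ skewIm K) : tau K u = -u := by
  obtain ⟨w, rfl⟩ := hu
  rw [oneMinusTau_apply, map_sub, tau_tau, neg_sub]

lemma sub_smul_mem_skewIm_of_add_tau_eq [CharZero K] {v t : VV K} {c : K}
    (h : v + tau K v = c • t) : v - (c / 2) • t ∈ skewIm K := by
  refine ⟨(2⁻¹ : K) • v, ?_⟩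
  rw [oneMinusTau_apply, map_smul, eq_sub_of_add_eq' h]
  module

lemma adVb_tmul (x a b : SVL K) :
    adVb K x (a ⊗ₜ b) = bk K x a ⊗ₜ b + a ⊗ₜ bk K x b := rfl

lemma adVb_tau (x : SVL K) (v : VV K) : adVb K x (tau K v) = tau K (adVb K x v) := by
  induction v using TensorProduct.induction_on with
  | zero => simp only [map_zero]
  | tmul a b => rw [tau_tmul, adVb_tmul, adVb_tmul, map_add, tau_tmul, tau_tmul, add_comm]
  | add v w hv hw => simp only [map_add, hv, hw]

lemma adVb_add_tau_eq_zero {x : SVL K} {v : VV K} (h : adVb K x v ∈ skewIm K) :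
    adVb K x (v + tau K v) = 0 := by
  rw [map_add, adVb_tau, tau_eq_neg_of_mem_skewIm h, add_neg_cancel]

noncomputable def coeff (i j : SVIx) : VV K →ₗ[K] K :=
  Finsupp.lapply (i, j) ∘ₗ (finsuppTensorFinsupp' K SVIx SVIx).toLinearMap

lemma coeff_tmul (i j : SVIx) (a b : SVL K) : coeff i j (a ⊗ₜ b) = a i * b j :=
  finsuppTensorFinsupp'_apply_apply K _ _ a b i j

lemma ext_coeff {v w : VV K} (h : ∀ i j, coeff i j v = coeff i j w) : v = w :=
  (finsuppTensorFinsupp' K SVIx SVIx).injective (Finsupp.ext fun ⟨i, j⟩ => h i j)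

lemma coeff_tau (i j : SVIx) (v : VV K) : coeff i j (tau K v) = coeff j i v := by
  induction v using TensorProduct.induction_on with
  | zero => simp only [map_zero]
  | tmul a b => rw [tau_tmul, coeff_tmul, coeff_tmul, mul_comm]
  | add v w hv hw => simp only [map_add, hv, hw]

lemma coeff_rTensor {g : SVL K →ₗ[K] SVL K} {i s : SVIx} {c : K} (hg : ∀ a, g a i = c * a s)
    (j : SVIx) (v : VV K) : coeff i j (g.rTensor (SVL K) v) = c * coeff s j v := by
  induction v using TensorProduct.induction_on with
  | zero => simp only [map_zero, mul_zero]
  | tmul a b => rw [LinearMap.rTensor_tmul, coeff_tmul, coeff_tmul, hg, mul_assoc]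
  | add v w hv hw => simp only [map_add, hv, hw, mul_add]

lemma coeff_lTensor {g : SVL K →ₗ[K] SVL K} {j s : SVIx} {c : K} (hg : ∀ a, g a j = c * a s)
    (i : SVIx) (v : VV K) : coeff i j (g.lTensor (SVL K) v) = c * coeff i s v := by
  induction v using TensorProduct.induction_on with
  | zero => simp only [map_zero, mul_zero]
  | tmul a b => rw [LinearMap.lTensor_tmul, coeff_tmul, coeff_tmul, hg, mul_left_comm]
  | add v w hv hw => simp only [map_add, hv, hw, mul_add]

lemma coeff_adVb {x : SVL K} {c : SVIx → K} {σ : SVIx → SVIx}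
    (hx : ∀ a i, bk K x a i = c i * a (σ i)) (i j : SVIx) (v : VV K) :
    coeff i j (adVb K x v) = c i * coeff (σ i) j v + c j * coeff i (σ j) v := by
  change coeff i j ((bk K x).rTensor _ v + (bk K x).lTensor _ v) = _
  rw [map_add, coeff_rTensor (hx · i), coeff_lTensor (hx · j)]

lemma bk_single_apply_of_brIx {i : SVIx} {c : SVIx → K} {σ : SVIx → SVIx}
    (h : ∀ j l, brIx K i j l = c l * (Finsupp.single j 1 : SVL K) (σ l)) (a : SVL K) (l : SVIx) :
    bk K (Finsupp.single i 1) a l = c l * a (σ l) := by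
  induction a using Finsupp.induction_linear with
  | zero => simp only [map_zero, Finsupp.coe_zero, Pi.zero_apply, mul_zero]
  | add f g hf hg => simp only [map_add, Finsupp.add_apply, hf, hg, mul_add]
  | single j t =>
    rw [← mul_one t, ← smul_eq_mul, ← Finsupp.smul_single, map_smul, Finsupp.smul_apply,
      Finsupp.smul_apply]
    simp only [bk, Finsupp.lsum_single, LinearMap.toSpanSingleton_apply, one_smul, smul_eq_mul, h]
    ring

def shiftL (m : ℤ) : SVIx → SVIx
  | .inl n => .inl (n - m)
  | .inr (.inl n) => .inr (.inl (n - m))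
  | .inr (.inr n) => .inr (.inr (n - m))

noncomputable def coefL (m : ℤ) : SVIx → K
  | .inl n => ((n - 2 * m : ℤ) : K)
  | .inr (.inl n) => ((2 * n + 1 - 3 * m : ℤ) : K) / 2
  | .inr (.inr n) => ((n - m : ℤ) : K)

-- Off the `M`-indices (resp. `Y`- and `M`-indices) the factor is zero and the shifted index is junk.
def shiftM (k : ℤ) : SVIx → SVIx
  | .inr (.inr n) => .inl (n - k)
  | _ => .inl 0

noncomputable def coefM (k : ℤ) : SVIx → K
  | .inr (.inr _) => -(k : K)
  | _ => 0

def shiftY (m : ℤ) : SVIx → SVIx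
  | .inr (.inl n) => .inl (n - m)
  | .inr (.inr n) => .inr (.inl (n - m - 1))
  | _ => .inl 0

noncomputable def coefY (m : ℤ) : SVIx → K
  | .inr (.inl n) => -(((3 * m + 1 - n : ℤ) : K) / 2)
  | .inr (.inr n) => ((n - 2 * m - 1 : ℤ) : K)
  | _ => 0

lemma bk_Lb_apply (m : ℤ) : ∀ a i, bk K (Lb K m) a i = coefL m i * a (shiftL m i) := by
  refine bk_single_apply_of_brIx fun j l => ?_
  rcases j with n | n | n <;> rcases l with k | k | k <;>
    simp [brIx, Lb, Yb, Mb, coefL, shiftL, Finsupp.single_apply] <;>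
    split_ifs <;> first | omega | (subst_vars; push_cast; ring)

lemma bk_Mb_apply (k : ℤ) : ∀ a i, bk K (Mb K k) a i = coefM k i * a (shiftM k i) := by
  refine bk_single_apply_of_brIx fun j l => ?_
  rcases j with n | n | n <;> rcases l with p | p | p <;>
    simp [brIx, Mb, coefM, shiftM, Finsupp.single_apply]
  split_ifs <;> first | omega | (subst_vars; ring)

lemma bk_Yb_apply (m : ℤ) : ∀ a i, bk K (Yb K m) a i = coefY m i * a (shiftY m i) := by
  refine bk_single_apply_of_brIx fun j l => ?_
  rcases j with n | n | n <;> rcases l with p | p | p <;>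
    simp [brIx, Yb, Mb, coefY, shiftY, Finsupp.single_apply] <;>
    split_ifs <;> first | omega | (subst_vars; push_cast; ring)

lemma shiftL_zero (i : SVIx) : shiftL 0 i = i := by
  rcases i with n | n | n <;> simp [shiftL]

section Invariant

variable {w : VV K}

lemma coeff_relation (hw : ∀ x, adVb K x w = 0) {x : SVL K} {c : SVIx → K}
    {σ : SVIx → SVIx} (hx : ∀ a i, bk K x a i = c i * a (σ i)) (i j : SVIx) :
    c i * coeff (σ i) j w + c j * coeff i (σ j) w = 0 := by
  rw [← coeff_adVb hx, hw, map_zero]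

-- `coefL 0 i` is the `L₀`-weight of the basis vector `i`.
lemma weight_mul_coeff_eq_zero (hw : ∀ x, adVb K x w = 0) (i j : SVIx) :
    (coefL 0 i + coefL 0 j) * coeff i j w = 0 := by
  have h := coeff_relation hw (bk_Lb_apply 0) i j
  rw [shiftL_zero, shiftL_zero] at h
  linear_combination h

lemma coeff_comm_of_tau_eq (hsym : tau K w = w) (i j : SVIx) :
    coeff i j w = coeff j i w := by
  rw [← coeff_tau, hsym]

lemma coeff_LL_eq_zero (hw : ∀ x, adVb K x w = 0) (p q : ℤ) :
    coeff (.inl p) (.inl q) w = 0 := by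
  simpa [coefM, shiftM] using coeff_relation hw (bk_Mb_apply 1) (.inr (.inr (p + 1))) (.inl q)

lemma coeff_LY_eq_zero (hw : ∀ x, adVb K x w = 0) (p q : ℤ) :
    coeff (.inl p) (.inr (.inl q)) w = 0 := by
  simpa [coefM, shiftM] using
    coeff_relation hw (bk_Mb_apply 1) (.inr (.inr (p + 1))) (.inr (.inl q))

lemma coeff_LM_eq_zero_of_add_ne_zero [CharZero K] (hw : ∀ x, adVb K x w = 0) {p q : ℤ}
    (hpq : p + q ≠ 0) : coeff (.inl p) (.inr (.inr q)) w = 0 := by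
  have h := weight_mul_coeff_eq_zero hw (.inl p) (.inr (.inr q))
  refine (mul_eq_zero.mp h).resolve_left ?_
  simp only [coefL, mul_zero, sub_zero]
  exact_mod_cast hpq

lemma coeff_LM_neg_eq_zero [CharZero K] (hw : ∀ x, adVb K x w = 0) (hsym : tau K w = w)
    {p : ℤ} (hp : p ≠ 0) : coeff (.inl p) (.inr (.inr (-p))) w = 0 := by
  have h := coeff_relation hw (bk_Mb_apply (-2 * p)) (.inr (.inr (-p))) (.inr (.inr (-p)))
  simp only [coefM, shiftM, show -p - -2 * p = p by ring] at h
  rw [coeff_comm_of_tau_eq hsym (.inr (.inr (-p)))] at h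
  have : (4 * p : K) * coeff (.inl p) (.inr (.inr (-p))) w = 0 := by
    push_cast at h; linear_combination h
  exact (mul_eq_zero.mp this).resolve_left (by exact_mod_cast (by omega : 4 * p ≠ 0))

lemma coeff_LM_eq_zero [CharZero K] (hw : ∀ x, adVb K x w = 0) (hsym : tau K w = w) (p q : ℤ) :
    coeff (.inl p) (.inr (.inr q)) w = 0 := by
  rcases ne_or_eq (p + q) 0 with hpq | hpq
  · exact coeff_LM_eq_zero_of_add_ne_zero hw hpq
  obtain rfl : q = -p := by omega
  rcases ne_or_eq p 0 with hp | rfl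
  · exact coeff_LM_neg_eq_zero hw hsym hp
  have h := coeff_relation hw (bk_Mb_apply 1) (.inr (.inr 1)) (.inr (.inr 0))
  have h' := coeff_LM_neg_eq_zero hw hsym (p := -1) (by norm_num)
  simp only [coefM, shiftM, sub_self, zero_sub, neg_neg] at h h' ⊢
  rw [coeff_comm_of_tau_eq hsym (.inr (.inr 1)), h'] at h
  simpa using h

lemma coeff_YY_eq_zero [CharZero K] (hw : ∀ x, adVb K x w = 0) (hsym : tau K w = w) (p q : ℤ) :
    coeff (.inr (.inl p)) (.inr (.inl q)) w = 0 := by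
  have h := coeff_relation hw (bk_Yb_apply (q - 1)) (.inr (.inl p)) (.inr (.inr (2 * q)))
  simp only [coefY, shiftY, show 2 * q - (q - 1) - 1 = q by ring, coeff_LM_eq_zero hw hsym] at h
  push_cast at h
  linear_combination h

lemma coeff_YM_eq_zero [CharZero K] (hw : ∀ x, adVb K x w = 0) (p q : ℤ) :
    coeff (.inr (.inl p)) (.inr (.inr q)) w = 0 := by
  have h := weight_mul_coeff_eq_zero hw (.inr (.inl p)) (.inr (.inr q))
  refine (mul_eq_zero.mp h).resolve_left ?_
  have hodd : ((2 * p + 1 + 2 * q : ℤ) : K) ≠ 0 := by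
    exact_mod_cast (by omega : 2 * p + 1 + 2 * q ≠ 0)
  simp only [coefL, mul_zero, sub_zero]
  push_cast at hodd ⊢
  contrapose! hodd
  linear_combination 2 * hodd

lemma coeff_MM_eq_zero_of_left_ne_zero [CharZero K] (hw : ∀ x, adVb K x w = 0) {p : ℤ}
    (hp : p ≠ 0) (q : ℤ) : coeff (.inr (.inr p)) (.inr (.inr q)) w = 0 := by
  have h := coeff_relation hw (bk_Lb_apply q) (.inr (.inr (p + q))) (.inr (.inr q))
  simp only [coefL, shiftL, add_sub_cancel_right, sub_self, Int.cast_zero, zero_mul, add_zero] at h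
  exact (mul_eq_zero.mp h).resolve_left (by exact_mod_cast hp)

lemma coeff_eq_zero_of_ne_M0 [CharZero K] (hw : ∀ x, adVb K x w = 0)
    (hsym : tau K w = w) {i j : SVIx} (hij : ¬(i = .inr (.inr 0) ∧ j = .inr (.inr 0))) :
    coeff i j w = 0 := by
  have hcomm := coeff_comm_of_tau_eq hsym
  rcases i with p | p | p <;> rcases j with q | q | q
  · exact coeff_LL_eq_zero hw p q
  · exact coeff_LY_eq_zero hw p q
  · exact coeff_LM_eq_zero hw hsym p q
  · rw [hcomm]; exact coeff_LY_eq_zero hw q p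
  · exact coeff_YY_eq_zero hw hsym p q
  · exact coeff_YM_eq_zero hw p q
  · rw [hcomm]; exact coeff_LM_eq_zero hw hsym q p
  · rw [hcomm]; exact coeff_YM_eq_zero hw q p
  · rcases ne_or_eq p 0 with hp | rfl
    · exact coeff_MM_eq_zero_of_left_ne_zero hw hp q
    · rw [hcomm]
      exact coeff_MM_eq_zero_of_left_ne_zero hw (by simpa using hij) 0

lemma eq_coeff_smul_M0_tmul_M0 [CharZero K] (hw : ∀ x, adVb K x w = 0)
    (hsym : tau K w = w) :
    w = coeff (.inr (.inr 0)) (.inr (.inr 0)) w • (Mb K 0 ⊗ₜ Mb K 0) := by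
  refine ext_coeff fun i j => ?_
  rw [map_smul, coeff_tmul, smul_eq_mul]
  by_cases hij : i = .inr (.inr 0) ∧ j = .inr (.inr 0)
  · obtain ⟨rfl, rfl⟩ := hij
    simp [Mb]
  · rw [coeff_eq_zero_of_ne_M0 hw hsym hij]
    simp only [Mb, Finsupp.single_apply]
    split_ifs <;> simp_all

end Invariant

/-- If `x · v ∈ Im(1-τ)` for all `x ∈ L`, then `v - d₀ M₀ ⊗ M₀ ∈ Im(1-τ)` for some `d₀`. -/
theorem sv_almost_skew :
    ∀ v : VV F, (∀ x : SVL F, adVb F x v ∈ skewIm F) →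
      ∃ d0 : F, v - d0 • (Mb F 0 ⊗ₜ[F] Mb F 0) ∈ skewIm F := by
  intro v hv
  have hw : ∀ x, adVb F x (v + tau F v) = 0 := fun x => adVb_add_tau_eq_zero (hv x)
  have hsym : tau F (v + tau F v) = v + tau F v := by rw [map_add, tau_tau, add_comm]
  exact ⟨_, sub_smul_mem_skewIm_of_add_tau_eq (eq_coeff_smul_M0_tmul_M0 hw hsym)⟩
end
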